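/- arXiv:2112.12894 — 2 statements merged into one kernel-verified Lean document; each statement's English description precedes it below -/
import Mathlib

section
/- Let Ω ⊆ ℝ^m be a bounded domain, h : Ω × Ω → ℝ nonnegative measurable, and 1 ≤ p ≤ q ≤ ∞ with 1/r = 1 + 1/q − 1/p. If A := sup_{x∈Ω} ‖h(x,·)‖_{L^r(Ω)} < ∞ and sup_{y∈Ω} ‖h(·,y)‖_{L^r(Ω)} ≤ A, then the operator (V_h f)(x) = ∫_Ω h(x,y) f(y) dy maps L^p(Ω) to L^q(Ω) with ‖V_h f‖_{L^q(Ω)} ≤ A ‖f‖_{L^p(Ω)}. -/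
open MeasureTheory ENNReal

/-- Potential estimate for singular kernels (Gilbarg–Trudinger Lemma 7.12):
if `Ω ⊆ ℝ^m` is a bounded domain, `h ≥ 0` measurable on `Ω × Ω`,
`1 ≤ p ≤ q ≤ ∞`, `1/r = 1 + 1/q − 1/p`, and the `L^r(Ω)` norms of `h(x,·)`
(and `h(·,y)`) are uniformly bounded by `A < ∞`, then
`V_h f (x) = ∫_Ω h(x,y) f(y) dy` satisfies `‖V_h f‖_{L^q(Ω)} ≤ A ‖f‖_{L^p(Ω)}`. -/
theorem stmt0 {m : ℕ} (Ω : Set (EuclideanSpace ℝ (Fin m)))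
    (hΩmeas : MeasurableSet Ω) (hΩbd : Bornology.IsBounded Ω)
    (h : EuclideanSpace ℝ (Fin m) → EuclideanSpace ℝ (Fin m) → ℝ)
    (hmeas : Measurable fun z : EuclideanSpace ℝ (Fin m) × EuclideanSpace ℝ (Fin m) =>
      h z.1 z.2)
    (hnn : ∀ x y, 0 ≤ h x y)
    (p q r : ℝ≥0∞) (hp1 : 1 ≤ p) (hpq : p ≤ q)
    (hr : 1 / r = 1 + 1 / q - 1 / p)
    (A : ℝ≥0∞) (hAfin : A < ⊤)
    (hA : ∀ x ∈ Ω, eLpNorm (fun y => h x y) r (volume.restrict Ω) ≤ A)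
    (hA' : ∀ y ∈ Ω, eLpNorm (fun x => h x y) r (volume.restrict Ω) ≤ A)
    (f : EuclideanSpace ℝ (Fin m) → ℝ) (hf : MemLp f p (volume.restrict Ω)) :
    eLpNorm (fun x => ∫ y in Ω, h x y * f y) q (volume.restrict Ω) ≤
      A * eLpNorm f p (volume.restrict Ω) := by
  classical
  set μ := volume.restrict Ω with hμdef
  -- basic facts about `p`
  have hp0 : p ≠ 0 := (zero_lt_one.trans_le hp1).ne'
  have hiptop : 1 / p ≤ 1 := by rw [one_div]; exact ENNReal.inv_le_one.mpr hp1
  -- a measurable representative of `f`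
  obtain ⟨g, hgsm, hgae⟩ := hf.1
  have hgm : Measurable g := hgsm.measurable
  set G : EuclideanSpace ℝ (Fin m) → ℝ≥0∞ := fun y => (‖g y‖₊ : ℝ≥0∞) with hGdef
  have hGm : Measurable G := hgm.nnnorm.coe_nnreal_ennreal
  set H : EuclideanSpace ℝ (Fin m) → EuclideanSpace ℝ (Fin m) → ℝ≥0∞ :=
    fun x y => ENNReal.ofReal (h x y) with hHdef
  have hHm : Measurable fun z : EuclideanSpace ℝ (Fin m) × EuclideanSpace ℝ (Fin m) =>
      H z.1 z.2 := hmeas.ennreal_ofReal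
  have hHxm : ∀ x, Measurable fun y => H x y := fun x => hHm.comp measurable_prodMk_left
  have hHym : ∀ y, Measurable fun x => H x y := fun y => hHm.comp measurable_prodMk_right
  have hHnn : ∀ x y, (‖h x y‖₊ : ℝ≥0∞) = H x y := fun x y => by
    simp only [hHdef]
    exact Real.enorm_eq_ofReal (hnn x y)
  have hfae : (fun y => (‖f y‖₊ : ℝ≥0∞)) =ᵐ[μ] G := by
    filter_upwards [hgae] with y hy
    simp only [hGdef, hy]
  -- pointwise bound on the potential by a lintegral
  have key : ∀ x, (‖∫ y in Ω, h x y * f y‖₊ : ℝ≥0∞) ≤ ∫⁻ y, H x y * G y ∂μ := by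
    intro x
    calc (‖∫ y in Ω, h x y * f y‖₊ : ℝ≥0∞)
        ≤ ∫⁻ y, ‖h x y * f y‖₊ ∂μ := enorm_integral_le_lintegral_enorm _
      _ = ∫⁻ y, H x y * ‖f y‖₊ ∂μ := by
          apply lintegral_congr fun y => ?_
          rw [nnnorm_mul, ENNReal.coe_mul, hHnn]
      _ = ∫⁻ y, H x y * G y ∂μ := by
          apply lintegral_congr_ae
          filter_upwards [hfae] with y hy
          rw [hy]
  by_cases hqtop : q = ∞
  · -- case q = ∞ : pointwise Hölder with conjugate exponents r, p
    have hrp : 1 / (1 : ℝ≥0∞) = 1 / r + 1 / p := by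
      rw [hr, hqtop]
      have hinf : (1 : ℝ≥0∞) / ∞ = 0 := by simp
      rw [hinf, add_zero, one_div_one]
      exact (tsub_add_cancel_of_le hiptop).symm
    have hx : ∀ x ∈ Ω, (‖∫ y in Ω, h x y * f y‖₊ : ℝ≥0∞) ≤ A * eLpNorm f p μ := by
      intro x hxΩ
      calc (‖∫ y in Ω, h x y * f y‖₊ : ℝ≥0∞)
          ≤ ∫⁻ y, ‖h x y * f y‖₊ ∂μ := enorm_integral_le_lintegral_enorm _
        _ = eLpNorm (fun y => h x y * f y) 1 μ := (eLpNorm_one_eq_lintegral_enorm (f := fun y => h x y * f y)).symm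
        _ ≤ eLpNorm (fun y => h x y) r μ * eLpNorm f p μ := by
            have hT : ENNReal.HolderTriple r p 1 := ⟨by simpa only [one_div] using hrp.symm⟩
            have := eLpNorm_le_eLpNorm_mul_eLpNorm_of_nnnorm (p := r) (q := p) (r := 1)
              (f := fun y => h x y)
              ((hmeas.comp (measurable_prodMk_left (x := x))).aestronglyMeasurable) hf.1
              (fun u v => u * v) 1
              (Filter.Eventually.of_forall fun y => by rw [one_mul]; exact le_of_eq (nnnorm_mul _ _))
            simpa using this
        _ ≤ A * eLpNorm f p μ := mul_le_mul_left (hA x hxΩ) _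
    rw [hqtop, eLpNorm_exponent_top]
    refine essSup_le_of_ae_le _ ?_
    filter_upwards [ae_restrict_mem hΩmeas] with x hxΩ
    exact hx x hxΩ
  -- main case : q < ∞
  have hq0 : q ≠ 0 := (zero_lt_one.trans_le (hp1.trans hpq)).ne'
  have hptop : p ≠ ∞ := fun hptop' => hqtop (top_le_iff.mp (hptop' ▸ hpq))
  have hiq0 : 1 / q ≠ 0 := by
    rw [one_div]; exact ENNReal.inv_ne_zero.mpr hqtop
  have hiptop' : 1 / p ≠ ∞ := hiptop.trans_lt ENNReal.one_lt_top |>.ne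
  have hqp : 1 / q ≤ 1 / p := by
    rw [one_div, one_div]; exact ENNReal.inv_le_inv' hpq
  have hir_ge : 1 / q ≤ 1 / r := by
    rw [hr]
    calc 1 / q = 1 / p + 1 / q - 1 / p := by
          rw [ENNReal.add_sub_cancel_left hiptop']
      _ ≤ 1 + 1 / q - 1 / p := tsub_le_tsub_right (add_le_add_left hiptop _) _
  have hir_le : 1 / r ≤ 1 := by
    rw [hr]
    calc 1 + 1 / q - 1 / p ≤ 1 + 1 / p - 1 / p := tsub_le_tsub_right (add_le_add_right hqp _) _
      _ = 1 := ENNReal.add_sub_cancel_right hiptop'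
  have hr1 : 1 ≤ r := by
    rw [one_div, ENNReal.inv_le_one] at hir_le; exact hir_le
  have hr0 : r ≠ 0 := (zero_lt_one.trans_le hr1).ne'
  have hrtop : r ≠ ∞ := by
    intro htop
    rw [htop] at hir_ge
    simp only [one_div, ENNReal.inv_top, le_zero_iff] at hir_ge
    exact hiq0 (by rwa [one_div])
  have hrq : r ≤ q := by
    rw [one_div, one_div] at hir_ge; exact ENNReal.inv_le_inv.mp hir_ge
  -- real exponents
  set P := p.toReal with hPdef
  set Q := q.toReal with hQdef
  set R := r.toReal with hRdef
  have hP : 0 < P := ENNReal.toReal_pos hp0 hptop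
  have hQ : 0 < Q := ENNReal.toReal_pos hq0 hqtop
  have hR : 0 < R := ENNReal.toReal_pos hr0 hrtop
  have hPQ : P ≤ Q := ENNReal.toReal_mono hqtop hpq
  have hRQ : R ≤ Q := ENNReal.toReal_mono hqtop hrq
  have hrel : 1 / R = 1 + 1 / Q - 1 / P := by
    have h1 : (1 / r).toReal = 1 / R := by rw [ENNReal.toReal_div, ENNReal.toReal_one]
    have hle : 1 / p ≤ 1 + 1 / q := hiptop.trans le_self_add
    have hfin : (1 : ℝ≥0∞) + 1 / q ≠ ∞ := by
      refine ENNReal.add_ne_top.mpr ⟨ENNReal.one_ne_top, ?_⟩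
      rw [one_div]; exact ENNReal.inv_ne_top.mpr hq0
    have h2 : ((1 : ℝ≥0∞) + 1 / q - 1 / p).toReal = 1 + 1 / Q - 1 / P := by
      rw [ENNReal.toReal_sub_of_le hle hfin,
        ENNReal.toReal_add ENNReal.one_ne_top (by rw [one_div]; exact ENNReal.inv_ne_top.mpr hq0),
        ENNReal.toReal_one, ENNReal.toReal_div, ENNReal.toReal_div, ENNReal.toReal_one]
    rw [← h1, ← h2, hr]
  set a : ℝ := 1 / R - 1 / Q with hadef
  set b : ℝ := 1 / P - 1 / Q with hbdef
  have ha0 : 0 ≤ a := sub_nonneg.mpr (one_div_le_one_div_of_le hR hRQ)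
  have hb0 : 0 ≤ b := sub_nonneg.mpr (one_div_le_one_div_of_le hP hPQ)
  have hsum : 1 / Q + a + b = 1 := by
    rw [hadef, hbdef]
    have : 1 / R + 1 / P - 1 / Q = 1 := by rw [hrel]; ring
    linarith
  have eA : R * (1 / Q) + R * a = 1 := by
    rw [hadef]; field_simp [hR.ne', hQ.ne']; ring
  have eB : P * (1 / Q) + P * b = 1 := by
    rw [hbdef]; field_simp [hP.ne', hQ.ne']; ring
  have e3 : R * (1 + a * Q) = Q := by
    rw [hadef]; field_simp [hR.ne', hQ.ne']; ring
  have e4 : 1 + b * Q = Q * (1 / P) := by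
    rw [hbdef]; field_simp [hP.ne', hQ.ne']; ring
  -- L^p norm of f in lintegral form
  set J : ℝ≥0∞ := ∫⁻ y, G y ^ P ∂μ with hJdef
  have hNp : eLpNorm f p μ = J ^ (1 / P) :=
    (eLpNorm_congr_ae hgae).trans (eLpNorm_eq_lintegral_rpow_enorm_toReal hp0 hptop)
  -- kernel bounds in lintegral form
  have elp : ∀ x, eLpNorm (fun y => h x y) r μ = (∫⁻ y, H x y ^ R ∂μ) ^ (1 / R) := by
    intro x
    rw [eLpNorm_eq_lintegral_rpow_enorm_toReal hr0 hrtop]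
    congr 1
    exact lintegral_congr fun y => by rw [← hHnn]; rfl
  have elp' : ∀ y, eLpNorm (fun x => h x y) r μ = (∫⁻ x, H x y ^ R ∂μ) ^ (1 / R) := by
    intro y
    rw [eLpNorm_eq_lintegral_rpow_enorm_toReal hr0 hrtop]
    congr 1
    exact lintegral_congr fun x => by rw [← hHnn]; rfl
  have hAx : ∀ x ∈ Ω, ∫⁻ y, H x y ^ R ∂μ ≤ A ^ R := by
    intro x hxΩ
    have h1 := hA x hxΩ
    rw [elp x] at h1
    calc ∫⁻ y, H x y ^ R ∂μ = ((∫⁻ y, H x y ^ R ∂μ) ^ (1 / R)) ^ R := by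
          rw [one_div, ENNReal.rpow_inv_rpow hR.ne']
      _ ≤ A ^ R := ENNReal.rpow_le_rpow h1 hR.le
  have hAy : ∀ y ∈ Ω, ∫⁻ x, H x y ^ R ∂μ ≤ A ^ R := by
    intro y hyΩ
    have h1 := hA' y hyΩ
    rw [elp' y] at h1
    calc ∫⁻ x, H x y ^ R ∂μ = ((∫⁻ x, H x y ^ R ∂μ) ^ (1 / R)) ^ R := by
          rw [one_div, ENNReal.rpow_inv_rpow hR.ne']
      _ ≤ A ^ R := ENNReal.rpow_le_rpow h1 hR.le
  -- pointwise three-factor Hölder inequality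
  have step : ∀ x, ∫⁻ y, H x y * G y ∂μ ≤
      (∫⁻ y, H x y ^ R * G y ^ P ∂μ) ^ (1 / Q) *
        ((∫⁻ y, H x y ^ R ∂μ) ^ a * J ^ b) := by
    intro x
    set F : Fin 3 → EuclideanSpace ℝ (Fin m) → ℝ≥0∞ :=
      ![fun y => H x y ^ R * G y ^ P, fun y => H x y ^ R, fun y => G y ^ P] with hFdef
    set e : Fin 3 → ℝ := ![1 / Q, a, b] with hedef
    have hfs : ∀ i ∈ (Finset.univ : Finset (Fin 3)), AEMeasurable (F i) μ := by
      intro i _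
      fin_cases i
      · exact (((hHxm x).pow_const R).mul (hGm.pow_const P)).aemeasurable
      · exact ((hHxm x).pow_const R).aemeasurable
      · exact (hGm.pow_const P).aemeasurable
    have hps : ∑ i : Fin 3, e i = 1 := by
      rw [hedef]; rw [Fin.sum_univ_three]
      simpa using hsum
    have h2ps : ∀ i ∈ (Finset.univ : Finset (Fin 3)), 0 ≤ e i := by
      intro i _
      fin_cases i
      · simp [hedef]; positivity
      · simpa [hedef] using ha0
      · simpa [hedef] using hb0
    have H3 := ENNReal.lintegral_prod_norm_pow_le Finset.univ hfs hps h2ps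
    simp only [Fin.prod_univ_three] at H3
    simp only [hFdef, hedef, Matrix.cons_val_zero, Matrix.cons_val_one, Matrix.head_cons,
      Matrix.cons_val_two, Matrix.tail_cons] at H3
    have hpt : ∀ y, H x y * G y =
        (H x y ^ R * G y ^ P) ^ (1 / Q) * (H x y ^ R) ^ a * (G y ^ P) ^ b := by
      intro y
      rw [ENNReal.mul_rpow_of_nonneg _ _ (by positivity : (0:ℝ) ≤ 1 / Q),
        ← ENNReal.rpow_mul, ← ENNReal.rpow_mul, ← ENNReal.rpow_mul, ← ENNReal.rpow_mul,
        show ∀ (A' B' C' D' : ℝ≥0∞), A' * B' * C' * D' = A' * C' * (B' * D') from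
          fun _ _ _ _ => by ring,
        ← ENNReal.rpow_add_of_nonneg _ _ (by positivity) (by positivity),
        ← ENNReal.rpow_add_of_nonneg _ _ (by positivity) (by positivity),
        eA, eB, ENNReal.rpow_one, ENNReal.rpow_one]
    calc ∫⁻ y, H x y * G y ∂μ
        = ∫⁻ y, (H x y ^ R * G y ^ P) ^ (1 / Q) * (H x y ^ R) ^ a * (G y ^ P) ^ b ∂μ :=
          lintegral_congr fun y => hpt y
      _ ≤ (∫⁻ y, H x y ^ R * G y ^ P ∂μ) ^ (1 / Q) * (∫⁻ y, H x y ^ R ∂μ) ^ a *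
            (∫⁻ y, G y ^ P ∂μ) ^ b := H3
      _ = (∫⁻ y, H x y ^ R * G y ^ P ∂μ) ^ (1 / Q) *
            ((∫⁻ y, H x y ^ R ∂μ) ^ a * J ^ b) := by rw [mul_assoc]
  -- the double integral bound (Tonelli)
  have hWm : Measurable fun z : EuclideanSpace ℝ (Fin m) × EuclideanSpace ℝ (Fin m) =>
      H z.1 z.2 ^ R * G z.2 ^ P :=
    (hHm.pow_const R).mul ((hGm.comp measurable_snd).pow_const P)
  have hKm : Measurable fun x => ∫⁻ y, H x y ^ R * G y ^ P ∂μ :=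
    Measurable.lintegral_prod_right (f := fun x y => H x y ^ R * G y ^ P) hWm
  have tonelli : ∫⁻ x, (∫⁻ y, H x y ^ R * G y ^ P ∂μ) ∂μ ≤ A ^ R * J := by
    rw [lintegral_lintegral_swap hWm.aemeasurable]
    calc ∫⁻ y, (∫⁻ x, H x y ^ R * G y ^ P ∂μ) ∂μ
        = ∫⁻ y, (∫⁻ x, H x y ^ R ∂μ) * G y ^ P ∂μ := by
          refine lintegral_congr fun y => ?_
          rw [lintegral_mul_const _ ((hHym y).pow_const R)]
      _ ≤ ∫⁻ y, A ^ R * G y ^ P ∂μ := by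
          refine lintegral_mono_ae ?_
          filter_upwards [ae_restrict_mem hΩmeas] with y hyΩ
          exact mul_le_mul_left (hAy y hyΩ) _
      _ = A ^ R * J := lintegral_const_mul _ (hGm.pow_const P)
  -- main estimate
  set C : ℝ≥0∞ := (A ^ R) ^ (a * Q) * J ^ (b * Q) with hCdef
  have big : ∫⁻ x, (‖∫ y in Ω, h x y * f y‖₊ : ℝ≥0∞) ^ Q ∂μ ≤ A ^ R * J * C := by
    calc ∫⁻ x, (‖∫ y in Ω, h x y * f y‖₊ : ℝ≥0∞) ^ Q ∂μ
        ≤ ∫⁻ x, (∫⁻ y, H x y ^ R * G y ^ P ∂μ) * C ∂μ := by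
          refine lintegral_mono_ae ?_
          filter_upwards [ae_restrict_mem hΩmeas] with x hxΩ
          calc (‖∫ y in Ω, h x y * f y‖₊ : ℝ≥0∞) ^ Q
              ≤ ((∫⁻ y, H x y ^ R * G y ^ P ∂μ) ^ (1 / Q) *
                  ((∫⁻ y, H x y ^ R ∂μ) ^ a * J ^ b)) ^ Q :=
                ENNReal.rpow_le_rpow ((key x).trans (step x)) hQ.le
            _ ≤ ((∫⁻ y, H x y ^ R * G y ^ P ∂μ) ^ (1 / Q) *
                  ((A ^ R) ^ a * J ^ b)) ^ Q := by
                refine ENNReal.rpow_le_rpow ?_ hQ.le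
                exact mul_le_mul_right
                  (mul_le_mul_left (ENNReal.rpow_le_rpow (hAx x hxΩ) ha0) _) _
            _ = (∫⁻ y, H x y ^ R * G y ^ P ∂μ) * C := by
                rw [ENNReal.mul_rpow_of_nonneg _ _ hQ.le,
                  ENNReal.mul_rpow_of_nonneg _ _ hQ.le,
                  ← ENNReal.rpow_mul, ← ENNReal.rpow_mul, ← ENNReal.rpow_mul,
                  one_div_mul_cancel hQ.ne', ENNReal.rpow_one, hCdef,
                  ENNReal.rpow_mul A R (a * Q), ENNReal.rpow_mul J b Q]
      _ = (∫⁻ x, (∫⁻ y, H x y ^ R * G y ^ P ∂μ) ∂μ) * C := lintegral_mul_const _ hKm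
      _ ≤ A ^ R * J * C := mul_le_mul_left tonelli _
  have hfinal : (A ^ R * J * C) ^ (1 / Q) = A * J ^ (1 / P) := by
    have h1 : A ^ R * J * C = A ^ Q * J ^ (Q * (1 / P)) := by
      rw [hCdef, show A ^ R * J * ((A ^ R) ^ (a * Q) * J ^ (b * Q)) =
        A ^ R * (A ^ R) ^ (a * Q) * (J * J ^ (b * Q)) from by ring]
      congr 1
      · calc A ^ R * (A ^ R) ^ (a * Q) = (A ^ R) ^ (1 : ℝ) * (A ^ R) ^ (a * Q) := by
              rw [ENNReal.rpow_one]
          _ = (A ^ R) ^ (1 + a * Q) :=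
              (ENNReal.rpow_add_of_nonneg _ _ zero_le_one (by positivity)).symm
          _ = A ^ (R * (1 + a * Q)) := by rw [← ENNReal.rpow_mul]
          _ = A ^ Q := by rw [e3]
      · calc J * J ^ (b * Q) = J ^ (1 : ℝ) * J ^ (b * Q) := by rw [ENNReal.rpow_one]
          _ = J ^ (1 + b * Q) :=
              (ENNReal.rpow_add_of_nonneg _ _ zero_le_one (by positivity)).symm
          _ = J ^ (Q * (1 / P)) := by rw [e4]
    rw [h1, ENNReal.mul_rpow_of_nonneg _ _ (by positivity : (0:ℝ) ≤ 1 / Q),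
      ← ENNReal.rpow_mul, ← ENNReal.rpow_mul, mul_one_div_cancel hQ.ne', ENNReal.rpow_one,
      show Q * (1 / P) * (1 / Q) = 1 / P from by field_simp]
  calc eLpNorm (fun x => ∫ y in Ω, h x y * f y) q μ
      = (∫⁻ x, (‖∫ y in Ω, h x y * f y‖₊ : ℝ≥0∞) ^ Q ∂μ) ^ (1 / Q) :=
        eLpNorm_eq_lintegral_rpow_enorm_toReal hq0 hqtop
    _ ≤ (A ^ R * J * C) ^ (1 / Q) := ENNReal.rpow_le_rpow big (by positivity)
    _ = A * J ^ (1 / P) := hfinal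
    _ = A * eLpNorm f p μ := by rw [hNp]
end

section
/- Let H be a Hilbert space, and let T : dom(T) ⊆ H₁ → H₂ and S : dom(S) ⊆ H₂ → H₃ be densely defined closed operators between Hilbert spaces with S ∘ T = 0. Suppose there is a constant c > 0 such that ‖T* g‖² + ‖S g‖² ≥ c ‖g‖² for all g ∈ dom(T*) ∩ dom(S). Then for every v ∈ ker(S) there exists u ∈ H₁ with T u = v and ‖u‖ ≤ c^{−1/2} ‖v‖. -/
open scoped InnerProductSpace


/-- Hörmander's abstract L² existence lemma: let `T : H₁ → H₂`, `S : H₂ → H₃` be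
densely defined closed operators between complex Hilbert spaces with `S ∘ T = 0`.
If `‖T*g‖² + ‖Sg‖² ≥ c ‖g‖²` for all `g ∈ dom(T*) ∩ dom(S)` with `c > 0`, then for
every `v ∈ ker S` there is `u ∈ dom T` with `Tu = v` and `‖u‖ ≤ c^{−1/2} ‖v‖`. -/
theorem stmt17 {H1 H2 H3 : Type*}
    [NormedAddCommGroup H1] [InnerProductSpace ℂ H1] [CompleteSpace H1]
    [NormedAddCommGroup H2] [InnerProductSpace ℂ H2] [CompleteSpace H2]
    [NormedAddCommGroup H3] [InnerProductSpace ℂ H3] [CompleteSpace H3]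
    (T : H1 →ₗ.[ℂ] H2) (S : H2 →ₗ.[ℂ] H3)
    (hTdense : Dense (T.domain : Set H1)) (hSdense : Dense (S.domain : Set H2))
    (hTclosed : IsClosed (T.graph : Set (H1 × H2)))
    (hSclosed : IsClosed (S.graph : Set (H2 × H3)))
    (hST : ∀ x : T.domain, ∃ hx : (T x : H2) ∈ S.domain, S ⟨T x, hx⟩ = 0)
    (c : ℝ) (hc : 0 < c)
    (hest : ∀ g : H2, ∀ (hg1 : g ∈ (T.adjoint).domain) (hg2 : g ∈ S.domain),
      c * ‖g‖ ^ 2 ≤ ‖T.adjoint ⟨g, hg1⟩‖ ^ 2 + ‖S ⟨g, hg2⟩‖ ^ 2) :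
    ∀ v : H2, ∀ hv : v ∈ S.domain, S ⟨v, hv⟩ = 0 →
      ∃ u : H1, ∃ hu : u ∈ T.domain, T ⟨u, hu⟩ = v ∧ ‖u‖ ≤ c ^ (-(1 : ℝ) / 2) * ‖v‖ := by
  intro v hv hSv
  set A := T.adjoint with hA
  -- the kernel of S as a submodule of H2
  set N : Submodule ℂ H2 := S.graph.comap (LinearMap.inl ℂ H2 H3) with hNdef
  have hNmem : ∀ x : H2, x ∈ N ↔ ∃ hx : x ∈ S.domain, S ⟨x, hx⟩ = 0 := by
    intro x
    constructor
    · intro h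
      rw [hNdef, Submodule.mem_comap, LinearMap.inl_apply, LinearPMap.mem_graph_iff] at h
      obtain ⟨y, hy1, hy2⟩ := h
      have hy1' : (y : H2) = x := hy1
      refine ⟨hy1' ▸ y.2, ?_⟩
      have : (⟨x, hy1' ▸ y.2⟩ : S.domain) = y := Subtype.ext hy1'.symm
      rw [this, hy2]
    · rintro ⟨hx, h0⟩
      rw [hNdef, Submodule.mem_comap, LinearMap.inl_apply, LinearPMap.mem_graph_iff]
      exact ⟨⟨x, hx⟩, rfl, h0⟩
  have hNclosed : IsClosed (N : Set H2) := by
    have : (N : Set H2) = (fun x : H2 => (x, (0 : H3))) ⁻¹' (S.graph : Set (H2 × H3)) := rfl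
    rw [this]
    exact hSclosed.preimage (continuous_id.prodMk continuous_const)
  haveI : CompleteSpace N := hNclosed.completeSpace_coe
  have hvN : v ∈ N := (hNmem v).2 ⟨hv, hSv⟩
  -- key a priori estimate for the linear functional
  have key : ∀ g : H2, ∀ hg : g ∈ A.domain,
      ‖(⟪v, g⟫_ℂ)‖ ≤ ((Real.sqrt c)⁻¹ * ‖v‖) * ‖A ⟨g, hg⟩‖ := by
    intro g hg
    set g₁ : H2 := (N.orthogonalProjectionOnto g : H2) with hg₁def
    set g₂ : H2 := g - g₁ with hg₂def
    have hg₁N : g₁ ∈ N := (N.orthogonalProjectionOnto g).2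
    have hg₂perp : g₂ ∈ Nᗮ := N.sub_starProjection_mem_orthogonal g
    obtain ⟨hg₁S, hg₁S0⟩ := (hNmem g₁).1 hg₁N
    -- g₂ is in the domain of the adjoint with A g₂ = 0
    have h2 : ∀ x : T.domain, ⟪g₂, (T x : H2)⟫_ℂ = 0 := by
      intro x
      exact (Submodule.mem_orthogonal' N g₂).1 hg₂perp _ ((hNmem _).2 (hST x))
    have hg₂dom : g₂ ∈ A.domain :=
      T.mem_adjoint_domain_of_exists g₂ ⟨0, fun x => by rw [inner_zero_left, h2 x]⟩
    have hAg₂ : A ⟨g₂, hg₂dom⟩ = 0 :=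
      LinearPMap.adjoint_apply_eq hTdense _ (fun x => by rw [inner_zero_left, h2 x])
    have hg₁dom : g₁ ∈ A.domain := by
      have h' : g₁ = g - g₂ := by rw [hg₂def, sub_sub_cancel]
      rw [h']; exact A.domain.sub_mem hg hg₂dom
    have hAg₁ : A ⟨g₁, hg₁dom⟩ = A ⟨g, hg⟩ := by
      have h1 : (⟨g₁, hg₁dom⟩ : A.domain) = ⟨g, hg⟩ - ⟨g₂, hg₂dom⟩ := by
        apply Subtype.ext
        simp [hg₂def]
      rw [h1, A.map_sub, hAg₂, sub_zero]
    have hestg : c * ‖g₁‖ ^ 2 ≤ ‖A ⟨g, hg⟩‖ ^ 2 := by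
      have h := hest g₁ hg₁dom hg₁S
      rw [hg₁S0, hAg₁] at h
      simpa using h
    have hnorm1 : ‖g₁‖ ≤ (Real.sqrt c)⁻¹ * ‖A ⟨g, hg⟩‖ := by
      rw [inv_mul_eq_div, le_div_iff₀ (Real.sqrt_pos.2 hc)]
      have h1 : (‖g₁‖ * Real.sqrt c) ^ 2 ≤ ‖A ⟨g, hg⟩‖ ^ 2 := by
        rw [mul_pow, Real.sq_sqrt hc.le]
        nlinarith [hestg]
      exact (pow_le_pow_iff_left₀ (mul_nonneg (norm_nonneg _) (Real.sqrt_nonneg c))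
        (norm_nonneg _) two_ne_zero).1 h1
    have hvg2 : ⟪v, g₂⟫_ℂ = 0 := (Submodule.mem_orthogonal N g₂).1 hg₂perp v hvN
    have hsplit : ⟪v, g⟫_ℂ = ⟪v, g₁⟫_ℂ := by
      have : g = g₁ + g₂ := by rw [hg₂def, add_sub_cancel]
      rw [this, inner_add_right, hvg2, add_zero]
    calc ‖(⟪v, g⟫_ℂ)‖ = ‖(⟪v, g₁⟫_ℂ)‖ := by rw [hsplit]
      _ ≤ ‖v‖ * ‖g₁‖ := norm_inner_le_norm v g₁
      _ ≤ ‖v‖ * ((Real.sqrt c)⁻¹ * ‖A ⟨g, hg⟩‖) :=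
          mul_le_mul_of_nonneg_left hnorm1 (norm_nonneg v)
      _ = ((Real.sqrt c)⁻¹ * ‖v‖) * ‖A ⟨g, hg⟩‖ := by ring
  -- construct the functional on the range of A and hence u by Riesz
  set C : ℝ := (Real.sqrt c)⁻¹ * ‖v‖ with hCdef
  have hC0 : 0 ≤ C := mul_nonneg (inv_nonneg.2 (Real.sqrt_nonneg c)) (norm_nonneg v)
  set Af : A.domain →ₗ[ℂ] H1 := A.toFun with hAf
  set S₀ : A.domain →ₗ[ℂ] ℂ := (innerSL ℂ v).toLinearMap.comp A.domain.subtype with hS₀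
  have hS₀apply : ∀ g : A.domain, S₀ g = ⟪v, (g : H2)⟫_ℂ := fun g => rfl
  have hkey' : ∀ g : A.domain, ‖S₀ g‖ ≤ C * ‖Af g‖ := by
    intro g
    rw [hS₀apply]
    exact key g g.2
  have hker : LinearMap.ker Af ≤ LinearMap.ker S₀ := by
    intro g hgk
    rw [LinearMap.mem_ker] at hgk ⊢
    have := hkey' g
    rw [hgk, norm_zero, mul_zero] at this
    exact norm_le_zero_iff.1 this
  set R : Submodule ℂ H1 := LinearMap.range Af with hR
  set ℓ₀ : R →ₗ[ℂ] ℂ :=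
    ((LinearMap.ker Af).liftQ S₀ hker).comp Af.quotKerEquivRange.symm.toLinearMap with hℓ₀
  have hℓ₀apply : ∀ g : A.domain, ∀ h : Af g ∈ R, ℓ₀ ⟨Af g, h⟩ = S₀ g := by
    intro g h
    have e1 : Af.quotKerEquivRange.symm ⟨Af g, h⟩ = Submodule.Quotient.mk g := by
      have := Af.quotKerEquivRange_symm_apply_image g h
      simpa using this
    rw [hℓ₀]
    simp only [LinearMap.comp_apply, LinearEquiv.coe_toLinearMap, e1]
    exact Submodule.liftQ_apply _ _ _
  have hbound : ∀ r : R, ‖ℓ₀ r‖ ≤ C * ‖r‖ := by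
    intro r
    obtain ⟨g, hgr⟩ := r.2
    have hrr : r = ⟨Af g, ⟨g, rfl⟩⟩ := Subtype.ext hgr.symm
    rw [hrr, hℓ₀apply g ⟨g, rfl⟩]
    have : ‖(⟨Af g, ⟨g, rfl⟩⟩ : R)‖ = ‖Af g‖ := rfl
    rw [this]
    exact hkey' g
  set ℓ : R →L[ℂ] ℂ := ℓ₀.mkContinuous C hbound with hℓ
  have hℓnorm : ‖ℓ‖ ≤ C := ℓ₀.mkContinuous_norm_le hC0 hbound
  obtain ⟨φ, hφext, hφnorm⟩ := exists_extension_norm_eq R ℓ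
  set u : H1 := (InnerProductSpace.toDual ℂ H1).symm φ with hu
  have hu_inner : ∀ x : H1, ⟪u, x⟫_ℂ = φ x := fun x => InnerProductSpace.toDual_symm_apply
  have hu_norm : ‖u‖ ≤ C := by
    rw [hu]
    rw [LinearIsometryEquiv.norm_map]
    rw [hφnorm]
    exact hℓnorm
  -- the defining property of u
  have key2 : ∀ g : H2, ∀ hg : g ∈ A.domain, ⟪A ⟨g, hg⟩, u⟫_ℂ = ⟪g, v⟫_ℂ := by
    intro g hg
    have h1 : ⟪u, A ⟨g, hg⟩⟫_ℂ = ⟪v, g⟫_ℂ := by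
      have hmem : Af ⟨g, hg⟩ ∈ R := LinearMap.mem_range_self Af ⟨g, hg⟩
      have hAfg : Af ⟨g, hg⟩ = A ⟨g, hg⟩ := rfl
      rw [hu_inner, ← hAfg]
      have := hφext ⟨Af ⟨g, hg⟩, hmem⟩
      rw [this]
      have : ℓ ⟨Af ⟨g, hg⟩, hmem⟩ = ℓ₀ ⟨Af ⟨g, hg⟩, hmem⟩ := rfl
      rw [this, hℓ₀apply ⟨g, hg⟩ hmem, hS₀apply]
    calc ⟪A ⟨g, hg⟩, u⟫_ℂ = starRingEnd ℂ ⟪u, A ⟨g, hg⟩⟫_ℂ := (inner_conj_symm _ _).symm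
      _ = starRingEnd ℂ ⟪v, g⟫_ℂ := by rw [h1]
      _ = ⟪g, v⟫_ℂ := inner_conj_symm _ _
  -- now show (u, v) is in the graph of T, using closedness of the graph
  set e2 : WithLp 2 (H1 × H2) ≃L[ℂ] H1 × H2 := WithLp.prodContinuousLinearEquiv 2 ℂ H1 H2 with he2
  set K : Submodule ℂ (WithLp 2 (H1 × H2)) :=
    T.graph.comap (e2.toLinearEquiv : WithLp 2 (H1 × H2) →ₗ[ℂ] H1 × H2) with hK
  have hKclosed : IsClosed (K : Set (WithLp 2 (H1 × H2))) := by
    have : (K : Set (WithLp 2 (H1 × H2))) = e2 ⁻¹' (T.graph : Set (H1 × H2)) := rfl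
    rw [this]
    exact hTclosed.preimage e2.continuous
  haveI : CompleteSpace K := hKclosed.completeSpace_coe
  have hKmem : ∀ z : WithLp 2 (H1 × H2), z ∈ K ↔ (e2 z : H1 × H2) ∈ T.graph := fun z => Iff.rfl
  have hmem : e2.symm (u, v) ∈ K := by
    rw [← Submodule.orthogonal_orthogonal K, Submodule.mem_orthogonal]
    intro w hw
    set a : H1 := (e2 w).1 with ha
    set b : H2 := (e2 w).2 with hb
    have hab : ∀ x : T.domain, ⟪(x : H1), a⟫_ℂ + ⟪(T x : H2), b⟫_ℂ = 0 := by
      intro x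
      have hzK : e2.symm ((x : H1), (T x : H2)) ∈ K := by
        rw [hKmem, ContinuousLinearEquiv.apply_symm_apply]
        exact T.mem_graph x
      have h0 := (Submodule.mem_orthogonal K w).1 hw _ hzK
      have : ⟪e2.symm ((x : H1), (T x : H2)), w⟫_ℂ
          = ⟪(x : H1), a⟫_ℂ + ⟪(T x : H2), b⟫_ℂ := by
        rw [WithLp.prod_inner_apply]
        rfl
      rw [this] at h0
      exact h0
    have hbdom : b ∈ A.domain := by
      refine T.mem_adjoint_domain_of_exists b ⟨-a, fun x => ?_⟩
      have h1 := hab x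
      have h2 : ⟪(T x : H2), b⟫_ℂ = -⟪(x : H1), a⟫_ℂ := by linear_combination h1
      calc ⟪-a, (x : H1)⟫_ℂ = -⟪a, (x : H1)⟫_ℂ := inner_neg_left _ _
        _ = -(starRingEnd ℂ ⟪(x : H1), a⟫_ℂ) := by rw [inner_conj_symm]
        _ = starRingEnd ℂ (-⟪(x : H1), a⟫_ℂ) := (map_neg _ _).symm
        _ = starRingEnd ℂ ⟪(T x : H2), b⟫_ℂ := by rw [h2]
        _ = ⟪b, (T x : H2)⟫_ℂ := inner_conj_symm _ _
    have hAb : A ⟨b, hbdom⟩ = -a := by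
      refine LinearPMap.adjoint_apply_eq hTdense _ (fun x => ?_)
      have h1 := hab x
      have h2 : ⟪(T x : H2), b⟫_ℂ = -⟪(x : H1), a⟫_ℂ := by linear_combination h1
      calc ⟪-a, (x : H1)⟫_ℂ = -⟪a, (x : H1)⟫_ℂ := inner_neg_left _ _
        _ = -(starRingEnd ℂ ⟪(x : H1), a⟫_ℂ) := by rw [inner_conj_symm]
        _ = starRingEnd ℂ (-⟪(x : H1), a⟫_ℂ) := (map_neg _ _).symm
        _ = starRingEnd ℂ ⟪(T x : H2), b⟫_ℂ := by rw [h2]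
        _ = ⟪b, (T x : H2)⟫_ℂ := inner_conj_symm _ _
    have hbv : ⟪b, v⟫_ℂ = ⟪-a, u⟫_ℂ := by
      rw [← key2 b hbdom, hAb]
    have : ⟪w, e2.symm (u, v)⟫_ℂ = ⟪a, u⟫_ℂ + ⟪b, v⟫_ℂ := by
      rw [WithLp.prod_inner_apply]
      rfl
    rw [this, hbv, inner_neg_left, add_neg_cancel]
  -- extract the conclusion
  rw [hKmem, ContinuousLinearEquiv.apply_symm_apply, LinearPMap.mem_graph_iff] at hmem
  obtain ⟨y, hy1, hy2⟩ := hmem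
  have hy1' : (y : H1) = u := hy1
  refine ⟨u, hy1' ▸ y.2, ?_, ?_⟩
  · have : (⟨u, hy1' ▸ y.2⟩ : T.domain) = y := Subtype.ext hy1'.symm
    rw [this]
    exact hy2
  · have hpow : c ^ (-(1 : ℝ) / 2) = (Real.sqrt c)⁻¹ := by
      rw [neg_div, Real.rpow_neg hc.le, Real.sqrt_eq_rpow]
    rw [hpow]
    exact hu_norm
end
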